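/- Let H = p1^2 + p2^2 + a1*(x^2 + y^2) + a2/x^2 + a3/y^2, L1 = (x*p2 - y*p1)^2 + a2*y^2/x^2 + a3*x^2/y^2, L2 = p1^2 + a1*x^2 + a2/x^2 on the open set x ≠ 0, y ≠ 0. Then {H, L1} = 0 and {H, L2} = 0 for the canonical Poisson bracket. -/

import Mathlib

/-- Canonical Poisson bracket on phase space (x, y, p1, p2). -/
noncomputable def poissonBracket (F G : ℝ → ℝ → ℝ → ℝ → ℝ) (x y p1 p2 : ℝ) : ℝ :=
    deriv (fun t => F x y t p2) p1 * deriv (fun t => G t y p1 p2) x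
  + deriv (fun t => F x y p1 t) p2 * deriv (fun t => G x t p1 p2) y
  - deriv (fun t => G x y t p2) p1 * deriv (fun t => F t y p1 p2) x
  - deriv (fun t => G x y p1 t) p2 * deriv (fun t => F x t p1 p2) y

noncomputable def Hf (a1 a2 a3 : ℝ) : ℝ → ℝ → ℝ → ℝ → ℝ :=
  fun x y p1 p2 => p1^2 + p2^2 + a1*(x^2 + y^2) + a2/x^2 + a3/y^2
noncomputable def L1f (a2 a3 : ℝ) : ℝ → ℝ → ℝ → ℝ → ℝ :=
  fun x y p1 p2 => (x*p2 - y*p1)^2 + a2*y^2/x^2 + a3*x^2/y^2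
noncomputable def L2f (a1 a2 : ℝ) : ℝ → ℝ → ℝ → ℝ → ℝ :=
  fun x _ p1 _ => p1^2 + a1*x^2 + a2/x^2

/-!
In each single coordinate `t`, each of `H`, `L1`, `L2` has the form `A + B t + C t² + D / t²`
(with `D = 0` in the momenta), so all partial derivatives are explicit; the two brackets then
vanish by a rational-function identity in `x, y, p1, p2`.
-/

theorem hasDerivAt_of_eq_quadratic {f : ℝ → ℝ} {f' x : ℝ} (A B C : ℝ)
    (hf : ∀ t, f t = A + B * t + C * t ^ 2) (hf' : f' = B + 2 * C * x) :
    HasDerivAt f f' x := by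
  rw [funext hf, hf']
  refine ((((hasDerivAt_id' x).const_mul B).const_add A).fun_add
    ((hasDerivAt_pow 2 x).const_mul C)).congr_deriv ?_
  norm_num
  ring

theorem hasDerivAt_of_eq_quadratic_add_div_sq {f : ℝ → ℝ} {f' x : ℝ} (A B C D : ℝ) (hx : x ≠ 0)
    (hf : ∀ t, f t = A + B * t + C * t ^ 2 + D / t ^ 2)
    (hf' : f' = B + 2 * C * x - 2 * D / x ^ 3) :
    HasDerivAt f f' x := by
  rw [funext hf, hf']
  refine ((hasDerivAt_of_eq_quadratic A B C (fun _ => rfl) rfl).fun_add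
    ((hasDerivAt_const x D).fun_div (hasDerivAt_pow 2 x) (pow_ne_zero 2 hx))).congr_deriv ?_
  field_simp
  ring

structure HasPartialDerivs (F : ℝ → ℝ → ℝ → ℝ → ℝ) (x y p1 p2 Fx Fy Fp1 Fp2 : ℝ) : Prop where
  hasDerivAt_x : HasDerivAt (fun t => F t y p1 p2) Fx x
  hasDerivAt_y : HasDerivAt (fun t => F x t p1 p2) Fy y
  hasDerivAt_p1 : HasDerivAt (fun t => F x y t p2) Fp1 p1
  hasDerivAt_p2 : HasDerivAt (fun t => F x y p1 t) Fp2 p2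

theorem HasPartialDerivs.poissonBracket_eq {F G : ℝ → ℝ → ℝ → ℝ → ℝ}
    {x y p1 p2 Fx Fy Fp1 Fp2 Gx Gy Gp1 Gp2 : ℝ}
    (hF : HasPartialDerivs F x y p1 p2 Fx Fy Fp1 Fp2)
    (hG : HasPartialDerivs G x y p1 p2 Gx Gy Gp1 Gp2) :
    poissonBracket F G x y p1 p2 = Fp1 * Gx + Fp2 * Gy - Gp1 * Fx - Gp2 * Fy := by
  rw [poissonBracket, hF.hasDerivAt_x.deriv, hF.hasDerivAt_y.deriv, hF.hasDerivAt_p1.deriv,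
    hF.hasDerivAt_p2.deriv, hG.hasDerivAt_x.deriv, hG.hasDerivAt_y.deriv,
    hG.hasDerivAt_p1.deriv, hG.hasDerivAt_p2.deriv]

theorem hasPartialDerivs_Hf (a1 a2 a3 : ℝ) {x y : ℝ} (p1 p2 : ℝ) (hx : x ≠ 0) (hy : y ≠ 0) :
    HasPartialDerivs (Hf a1 a2 a3) x y p1 p2
      (2 * a1 * x - 2 * a2 / x ^ 3) (2 * a1 * y - 2 * a3 / y ^ 3) (2 * p1) (2 * p2) where
  hasDerivAt_x :=
    hasDerivAt_of_eq_quadratic_add_div_sq (p1 ^ 2 + p2 ^ 2 + a1 * y ^ 2 + a3 / y ^ 2) 0 a1 a2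
      hx (fun t => by simp only [Hf]; ring) (by ring)
  hasDerivAt_y :=
    hasDerivAt_of_eq_quadratic_add_div_sq (p1 ^ 2 + p2 ^ 2 + a1 * x ^ 2 + a2 / x ^ 2) 0 a1 a3
      hy (fun t => by simp only [Hf]; ring) (by ring)
  hasDerivAt_p1 :=
    hasDerivAt_of_eq_quadratic (p2 ^ 2 + a1 * (x ^ 2 + y ^ 2) + a2 / x ^ 2 + a3 / y ^ 2) 0 1
      (fun t => by simp only [Hf]; ring) (by ring)
  hasDerivAt_p2 :=
    hasDerivAt_of_eq_quadratic (p1 ^ 2 + a1 * (x ^ 2 + y ^ 2) + a2 / x ^ 2 + a3 / y ^ 2) 0 1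
      (fun t => by simp only [Hf]; ring) (by ring)

theorem hasPartialDerivs_L1f (a2 a3 : ℝ) {x y : ℝ} (p1 p2 : ℝ) (hx : x ≠ 0) (hy : y ≠ 0) :
    HasPartialDerivs (L1f a2 a3) x y p1 p2
      (2 * p2 * (x * p2 - y * p1) - 2 * a2 * y ^ 2 / x ^ 3 + 2 * a3 * x / y ^ 2)
      (-2 * p1 * (x * p2 - y * p1) + 2 * a2 * y / x ^ 2 - 2 * a3 * x ^ 2 / y ^ 3)
      (-2 * y * (x * p2 - y * p1)) (2 * x * (x * p2 - y * p1)) where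
  hasDerivAt_x := hasDerivAt_of_eq_quadratic_add_div_sq ((y * p1) ^ 2) (-2 * y * p1 * p2)
    (p2 ^ 2 + a3 / y ^ 2) (a2 * y ^ 2) hx (fun t => by simp only [L1f]; ring) (by ring)
  hasDerivAt_y := hasDerivAt_of_eq_quadratic_add_div_sq ((x * p2) ^ 2) (-2 * x * p1 * p2)
    (p1 ^ 2 + a2 / x ^ 2) (a3 * x ^ 2) hy (fun t => by simp only [L1f]; ring) (by ring)
  hasDerivAt_p1 :=
    hasDerivAt_of_eq_quadratic ((x * p2) ^ 2 + a2 * y ^ 2 / x ^ 2 + a3 * x ^ 2 / y ^ 2)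
      (-2 * x * y * p2) (y ^ 2) (fun t => by simp only [L1f]; ring) (by ring)
  hasDerivAt_p2 :=
    hasDerivAt_of_eq_quadratic ((y * p1) ^ 2 + a2 * y ^ 2 / x ^ 2 + a3 * x ^ 2 / y ^ 2)
      (-2 * x * y * p1) (x ^ 2) (fun t => by simp only [L1f]; ring) (by ring)

theorem hasPartialDerivs_L2f (a1 a2 : ℝ) {x y : ℝ} (p1 p2 : ℝ) (hx : x ≠ 0) :
    HasPartialDerivs (L2f a1 a2) x y p1 p2 (2 * a1 * x - 2 * a2 / x ^ 3) 0 (2 * p1) 0 where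
  hasDerivAt_x := hasDerivAt_of_eq_quadratic_add_div_sq (p1 ^ 2) 0 a1 a2 hx
    (fun t => by simp only [L2f]; ring) (by ring)
  hasDerivAt_y := hasDerivAt_const y _
  hasDerivAt_p1 := hasDerivAt_of_eq_quadratic (a1 * x ^ 2 + a2 / x ^ 2) 0 1
    (fun t => by simp only [L2f]; ring) (by ring)
  hasDerivAt_p2 := hasDerivAt_const p2 _

theorem E1_superintegrable (a1 a2 a3 : ℝ) (x y p1 p2 : ℝ)
    (hx : x ≠ 0) (hy : y ≠ 0) :
    poissonBracket (Hf a1 a2 a3) (L1f a2 a3) x y p1 p2 = 0 ∧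
    poissonBracket (Hf a1 a2 a3) (L2f a1 a2) x y p1 p2 = 0 := by
  have hH := hasPartialDerivs_Hf a1 a2 a3 p1 p2 hx hy
  constructor
  · rw [hH.poissonBracket_eq (hasPartialDerivs_L1f a2 a3 p1 p2 hx hy)]
    field_simp
    ring
  · rw [hH.poissonBracket_eq (hasPartialDerivs_L2f a1 a2 p1 p2 hx)]
    ring
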